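/- The function x ↦ θ₁(x+1) - θ₁(x), where θ₁(x) = x(log x - ψ(x)), is strictly increasing on (0, ∞), and its derivative equals log(x+1) - log x - ψ'(x+1). -/

import Mathlib

open Real Filter

/-- The digamma function ψ(x) = Γ′(x)/Γ(x). -/
noncomputable def digamma (x : ℝ) : ℝ := deriv Real.Gamma x / Real.Gamma x

/-!
On `(0, ∞)` the bounds `log (x - 1) ≤ ψ x ≤ log x`, which come from the log-convexity of `Γ`,
make `log x - ψ x` tend to `0`, so the functional equation `ψ (x + 1) = ψ x + 1 / x`
telescopes to `log x - ψ x = ∑ₖ (1 / (x + k) - log (1 + 1 / (x + k)))`. Differentiating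
termwise gives `ψ' x = ∑ₖ 1 / (x + k) ^ 2`, and with the functional equations of `ψ` and `ψ'`
the derivative of `θ₁ (x + 1) - θ₁ x` collapses to `log (x + 1) - log x - ψ' (x + 1)`.
This is positive because `1 / a ^ 2 < 2 log a - log (a - 1) - log (a + 1)` for `a > 1`
(from `log (1 - u) < -u`), and these bounds at `a = x + 1 + k` telescope to
`log (x + 1) - log x`.
-/

open Set Topology

theorem hasSum_sub_succ_of_antitone {f : ℕ → ℝ} (hf : Antitone f)
    (h : Tendsto f atTop (𝓝 0)) : HasSum (fun k => f k - f (k + 1)) (f 0) := by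
  rw [hasSum_iff_tendsto_nat_of_nonneg fun k => sub_nonneg.mpr (hf k.le_succ)]
  simp_rw [Finset.sum_range_sub']
  simpa using (tendsto_const_nhds (x := f 0)).sub h

theorem log_add_one_sub_log_le_inv {t : ℝ} (ht : 0 < t) : log (t + 1) - log t ≤ t⁻¹ := by
  have h := log_le_sub_one_of_pos (div_pos (by linarith : 0 < t + 1) ht)
  rw [log_div (by linarith) ht.ne'] at h
  calc log (t + 1) - log t ≤ (t + 1) / t - 1 := h
    _ = t⁻¹ := by field_simp; ring

theorem inv_sq_lt_two_mul_log_sub_log_sub_log {a : ℝ} (ha : 1 < a) :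
    (a ^ 2)⁻¹ < 2 * log a - log (a - 1) - log (a + 1) := by
  have hu : 0 < (a ^ 2)⁻¹ := by positivity
  have hu1 : (a ^ 2)⁻¹ < 1 := inv_lt_one_of_one_lt₀ (one_lt_pow₀ ha two_ne_zero)
  have hprod : log (a - 1) + log (a + 1) = 2 * log a + log (1 - (a ^ 2)⁻¹) := by
    have hsq : 2 * log a = log (a ^ 2) := by rw [log_pow]; norm_num
    rw [← log_mul (by linarith) (by linarith), hsq, ← log_mul (by positivity) (by linarith)]
    congr 1
    field_simp
    ring
  have hlog : log (1 - (a ^ 2)⁻¹) < -(a ^ 2)⁻¹ := by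
    rw [log_lt_iff_lt_exp (by linarith)]
    linarith [add_one_lt_exp (neg_ne_zero.mpr hu.ne')]
  linarith

theorem hasDerivAt_log_Gamma {x : ℝ} (hx : 0 < x) :
    HasDerivAt (log ∘ Gamma) (digamma x) x :=
  (differentiableAt_Gamma fun m => by linarith [m.cast_nonneg (α := ℝ)]).hasDerivAt.log
    (Gamma_pos_of_pos hx).ne'

theorem log_Gamma_add_one {x : ℝ} (hx : 0 < x) :
    (log ∘ Gamma) (x + 1) = (log ∘ Gamma) x + log x := by
  simp only [Function.comp_apply, Gamma_add_one hx.ne',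
    log_mul hx.ne' (Gamma_pos_of_pos hx).ne', add_comm]

theorem digamma_add_one {x : ℝ} (hx : 0 < x) : digamma (x + 1) = digamma x + x⁻¹ := by
  have h : HasDerivAt (fun y => (log ∘ Gamma) (y + 1)) (digamma x + x⁻¹) x :=
    ((hasDerivAt_log_Gamma hx).add (hasDerivAt_log hx.ne')).congr_of_eventuallyEq <| by
      filter_upwards [eventually_gt_nhds hx] with y hy using log_Gamma_add_one hy
  exact ((hasDerivAt_log_Gamma (by linarith)).comp_add_const x 1).unique h

theorem slope_log_Gamma {x : ℝ} (hx : 0 < x) : slope (log ∘ Gamma) x (x + 1) = log x := by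
  rw [slope_def_field, log_Gamma_add_one hx]
  simp

theorem digamma_le_log {x : ℝ} (hx : 0 < x) : digamma x ≤ log x := by
  have h := convexOn_log_Gamma.deriv_le_slope (mem_Ioi.mpr hx) (mem_Ioi.mpr (by linarith))
    (lt_add_one x) (hasDerivAt_log_Gamma hx).differentiableAt
  rwa [(hasDerivAt_log_Gamma hx).deriv, slope_log_Gamma hx] at h

theorem log_le_digamma_add_one {x : ℝ} (hx : 0 < x) : log x ≤ digamma (x + 1) := by
  have hx1 : 0 < x + 1 := by linarith
  have h := convexOn_log_Gamma.slope_le_deriv (mem_Ioi.mpr hx) (mem_Ioi.mpr hx1)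
    (lt_add_one x) (hasDerivAt_log_Gamma hx1).differentiableAt
  rwa [(hasDerivAt_log_Gamma hx1).deriv, slope_log_Gamma hx] at h

theorem tendsto_log_sub_digamma_atTop : Tendsto (fun y => log y - digamma y) atTop (𝓝 0) := by
  have hinv : Tendsto (fun y : ℝ => (y - 1)⁻¹) atTop (𝓝 0) :=
    tendsto_inv_atTop_zero.comp (tendsto_atTop_add_const_right _ (-1) tendsto_id)
  refine tendsto_of_tendsto_of_tendsto_of_le_of_le' tendsto_const_nhds hinv ?_ ?_
  · filter_upwards [eventually_gt_atTop 0] with y hy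
    linarith [digamma_le_log hy]
  · filter_upwards [eventually_gt_atTop 1] with y hy
    have hy1 : 0 < y - 1 := by linarith
    have h := log_le_digamma_add_one hy1
    have h' := log_add_one_sub_log_le_inv hy1
    rw [sub_add_cancel] at h h'
    linarith

theorem hasSum_log_sub_digamma {x : ℝ} (hx : 0 < x) :
    HasSum (fun k : ℕ => (x + k)⁻¹ - (log (x + k + 1) - log (x + k)))
      (log x - digamma x) := by
  set D : ℕ → ℝ := fun k => log (x + k) - digamma (x + k)
  have hstep : ∀ k : ℕ, D k - D (k + 1) = (x + k)⁻¹ - (log (x + k + 1) - log (x + k)) := by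
    intro k
    simp only [D, Nat.cast_succ, ← add_assoc, digamma_add_one (by positivity : 0 < x + k)]
    ring
  have hD : Antitone D := antitone_nat_of_succ_le fun k => by
    have := log_add_one_sub_log_le_inv (by positivity : 0 < x + k)
    linarith [hstep k]
  have hlim : Tendsto D atTop (𝓝 0) :=
    tendsto_log_sub_digamma_atTop.comp
      (tendsto_atTop_add_const_left _ x tendsto_natCast_atTop_atTop)
  have h := hasSum_sub_succ_of_antitone hD hlim
  rw [funext hstep] at h
  simpa [D] using h

noncomputable def trigamma (x : ℝ) : ℝ := ∑' k : ℕ, ((x + k) ^ 2)⁻¹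

theorem summable_inv_add_nat_sq {x : ℝ} (hx : 0 < x) :
    Summable fun k : ℕ => ((x + k) ^ 2)⁻¹ :=
  ((summable_one_div_nat_add_rpow x 2).mpr one_lt_two).congr fun k => by
    rw [abs_of_pos (by positivity), rpow_two, one_div, add_comm]

theorem trigamma_eq_inv_sq_add_trigamma_add_one {x : ℝ} (hx : 0 < x) :
    trigamma x = (x ^ 2)⁻¹ + trigamma (x + 1) := by
  rw [trigamma, (summable_inv_add_nat_sq hx).tsum_eq_zero_add, trigamma]
  simp [add_assoc, add_comm (1 : ℝ)]

theorem hasSum_inv_sub_inv_add_one {x : ℝ} (hx : 0 < x) :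
    HasSum (fun k : ℕ => (x + k)⁻¹ - (x + k + 1)⁻¹) x⁻¹ := by
  have h := hasSum_sub_succ_of_antitone (f := fun k : ℕ => (x + k)⁻¹)
    (antitone_nat_of_succ_le fun k => inv_anti₀ (by positivity) (by push_cast; linarith))
    (tendsto_atTop_add_const_left _ x tendsto_natCast_atTop_atTop).inv_tendsto_atTop
  simpa [add_assoc] using h

theorem hasDerivAt_inv_sub_log_add_one_sub_log {t : ℝ} (ht : 0 < t) :
    HasDerivAt (fun s => s⁻¹ - (log (s + 1) - log s)) (t⁻¹ - (t + 1)⁻¹ - (t ^ 2)⁻¹) t := by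
  have h := (hasDerivAt_inv ht.ne').fun_sub
    ((((hasDerivAt_id' t).add_const 1).log (by linarith)).fun_sub (hasDerivAt_log ht.ne'))
  exact h.congr_deriv (by ring)

theorem norm_inv_sub_inv_add_one_sub_inv_sq_le {t : ℝ} (ht : 0 < t) :
    ‖t⁻¹ - (t + 1)⁻¹ - (t ^ 2)⁻¹‖ ≤ (t ^ 2)⁻¹ := by
  have h : t⁻¹ - (t + 1)⁻¹ - (t ^ 2)⁻¹ = -(t ^ 2 * (t + 1))⁻¹ := by field_simp; ring
  rw [h, norm_neg, norm_inv, norm_of_nonneg (by positivity)]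
  exact inv_anti₀ (by positivity) (le_mul_of_one_le_right (by positivity) (by linarith))

theorem hasDerivAt_tsum_inv_sub_log_add_one_sub_log {x : ℝ} (hx : 0 < x) :
    HasDerivAt (fun y : ℝ => ∑' k : ℕ, ((y + k)⁻¹ - (log (y + k + 1) - log (y + k))))
      (x⁻¹ - trigamma x) x := by
  have hx2 : 0 < x / 2 := half_pos hx
  have hx' : x ∈ Ioi (x / 2) := half_lt_self hx
  have h := hasDerivAt_tsum_of_isPreconnected (summable_inv_add_nat_sq hx2) isOpen_Ioi
    isPreconnected_Ioi
    (g := fun (k : ℕ) (y : ℝ) => (y + k)⁻¹ - (log (y + k + 1) - log (y + k)))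
    (g' := fun (k : ℕ) (y : ℝ) => (y + k)⁻¹ - (y + k + 1)⁻¹ - ((y + k) ^ 2)⁻¹)
    (fun k y hy => by
      have : 0 < y := hx2.trans hy
      exact (hasDerivAt_inv_sub_log_add_one_sub_log (by positivity)).comp_add_const y k)
    (fun k y hy => by
      have hy : x / 2 < y := hy
      have : 0 < y := hx2.trans hy
      refine (norm_inv_sub_inv_add_one_sub_inv_sq_le (by positivity)).trans ?_
      exact inv_anti₀ (by positivity) (pow_le_pow_left₀ (by positivity) (by linarith) 2))
    hx' (hasSum_log_sub_digamma hx).summable hx'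
  rwa [((hasSum_inv_sub_inv_add_one hx).sub (summable_inv_add_nat_sq hx).hasSum).tsum_eq] at h

theorem hasDerivAt_digamma {x : ℝ} (hx : 0 < x) : HasDerivAt digamma (trigamma x) x := by
  have h := (hasDerivAt_log hx.ne').fun_sub (hasDerivAt_tsum_inv_sub_log_add_one_sub_log hx)
  rw [sub_sub_cancel] at h
  refine h.congr_of_eventuallyEq ?_
  filter_upwards [eventually_gt_nhds hx] with y hy
  rw [(hasSum_log_sub_digamma hy).tsum_eq, sub_sub_cancel]

theorem trigamma_add_one_lt_log_sub_log {x : ℝ} (hx : 0 < x) :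
    trigamma (x + 1) < log (x + 1) - log x := by
  set c : ℕ → ℝ := fun k => log (x + k + 1) - log (x + k)
  have hlt : ∀ k : ℕ, ((x + 1 + k) ^ 2)⁻¹ < c k - c (k + 1) := by
    intro k
    have h := inv_sq_lt_two_mul_log_sub_log_sub_log (a := x + k + 1)
      (lt_add_of_pos_left 1 (by positivity))
    simp only [c, Nat.cast_succ]
    rw [add_sub_cancel_right] at h
    convert h using 1 <;> ring_nf
  have hc : HasSum (fun k => c k - c (k + 1)) (c 0) := hasSum_sub_succ_of_antitone
    (antitone_nat_of_succ_le fun k => by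
      linarith [hlt k, (by positivity : 0 < ((x + 1 + k) ^ 2)⁻¹)])
    ((tendsto_log_comp_add_sub_log 1).comp
      (tendsto_atTop_add_const_left _ x tendsto_natCast_atTop_atTop))
  rw [trigamma]
  simpa [c] using
    hasSum_lt (fun k => (hlt k).le) (hlt 0) (summable_inv_add_nat_sq (by linarith)).hasSum hc

noncomputable def theta (x : ℝ) : ℝ := x * (log x - digamma x)

theorem hasDerivAt_theta {x : ℝ} (hx : 0 < x) :
    HasDerivAt theta (log x - digamma x + 1 - x * trigamma x) x := by
  have h := (hasDerivAt_id' x).fun_mul ((hasDerivAt_log hx.ne').fun_sub (hasDerivAt_digamma hx))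
  exact h.congr_deriv (by field_simp; ring)

theorem hasDerivAt_theta_add_one_sub_theta {x : ℝ} (hx : 0 < x) :
    HasDerivAt (fun y => theta (y + 1) - theta y)
      (log (x + 1) - log x - trigamma (x + 1)) x := by
  have h := ((hasDerivAt_theta (by linarith)).comp_add_const x 1).fun_sub (hasDerivAt_theta hx)
  refine h.congr_deriv ?_
  rw [digamma_add_one hx, trigamma_eq_inv_sq_add_trigamma_add_one hx]
  field_simp
  ring

theorem theta_diff_strictMono :
    StrictMonoOn (fun x : ℝ => ((x + 1) * (Real.log (x + 1) - digamma (x + 1)) -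
      x * (Real.log x - digamma x))) (Set.Ioi 0) ∧
    ∀ x : ℝ, 0 < x →
      deriv (fun x : ℝ => ((x + 1) * (Real.log (x + 1) - digamma (x + 1)) -
        x * (Real.log x - digamma x))) x =
        Real.log (x + 1) - Real.log x - deriv digamma (x + 1) := by
  have hF (x : ℝ) (hx : 0 < x) := hasDerivAt_theta_add_one_sub_theta hx
  refine ⟨strictMonoOn_of_hasDerivWithinAt_pos (convex_Ioi 0)
    (f' := fun x => log (x + 1) - log x - trigamma (x + 1))
    (fun x hx => (hF x hx).continuousAt.continuousWithinAt) ?_ ?_, fun x hx => ?_⟩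
  · rw [interior_Ioi]
    exact fun x hx => (hF x hx).hasDerivWithinAt
  · rw [interior_Ioi]
    exact fun x hx => sub_pos.mpr (trigamma_add_one_lt_log_sub_log hx)
  · rw [(hasDerivAt_digamma (by linarith)).deriv]
    exact (hF x hx).deriv
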